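/- Suppose all roots of Δ have the same length (simply-laced case). If γ ≽ μ are positive roots, then the unique minimal-length element w_{γ,μ} ∈ W with w_{γ,μ}(γ) = μ is commutative, i.e., no reduced expression for w_{γ,μ} contains a substring σ_α σ_β σ_α with α, β adjacent simple roots. -/

import Mathlib

open scoped RealInnerProductSpace

/-- Data of a crystallographic root system in a real inner product space `V`,
with simple roots indexed by a finite type `ι`. -/
structure RSD (ι V : Type*) [Fintype ι] [NormedAddCommGroup V]
    [InnerProductSpace ℝ V] where
  /-- The simple roots. -/
  sroot : ι → V
  /-- The set of roots. -/
  Δ : Set V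
  finite : Δ.Finite
  zero_not_mem : (0 : V) ∉ Δ
  sroot_mem : ∀ i, sroot i ∈ Δ
  sroot_indep : LinearIndependent ℝ sroot
  neg_mem : ∀ a ∈ Δ, -a ∈ Δ
  /-- Crystallographic condition. -/
  crys : ∀ a ∈ Δ, ∀ b ∈ Δ, ∃ n : ℤ, 2 * ⟪a, b⟫ / ⟪a, a⟫ = (n : ℝ)
  /-- The reflection associated with a vector (only specified on roots). -/
  reflect : V → (V ≃ₗ[ℝ] V)
  reflect_apply : ∀ a ∈ Δ, ∀ v : V,
    reflect a v = v - (2 * ⟪a, v⟫ / ⟪a, a⟫) • a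
  reflect_root_mem : ∀ a ∈ Δ, ∀ b ∈ Δ, reflect a b ∈ Δ
  /-- Every root is a nonnegative or nonpositive integral combination of simple roots. -/
  decomp : ∀ a ∈ Δ, (∃ c : ι → ℕ, a = ∑ i, (c i : ℝ) • sroot i) ∨
      (∃ c : ι → ℕ, a = -∑ i, (c i : ℝ) • sroot i)
  /-- Irreducibility. -/
  irred : ∀ S T : Set V, S ∪ T = Δ → (∀ a ∈ S, ∀ b ∈ T, ⟪a, b⟫ = 0) →
      S = ∅ ∨ T = ∅

namespace RSD

variable {ι V : Type*} [Fintype ι] [NormedAddCommGroup V] [InnerProductSpace ℝ V]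
  (R : RSD ι V)

/-- The set of positive roots. -/
def pos : Set V := {a ∈ R.Δ | ∃ c : ι → ℕ, a = ∑ i, (c i : ℝ) • R.sroot i}

/-- `R.le μ γ` means `μ ≼ γ`, i.e. `γ - μ` is a nonnegative integral combination
of simple roots. -/
def le (μ γ : V) : Prop := ∃ c : ι → ℕ, γ - μ = ∑ i, (c i : ℝ) • R.sroot i

/-- The Weyl group, generated by the simple reflections. -/
def W : Subgroup (V ≃ₗ[ℝ] V) :=
  Subgroup.closure (Set.range fun i => R.reflect (R.sroot i))

/-- The inversion set `N(w) = {γ ∈ Δ⁺ ∣ w γ ∈ -Δ⁺}`. -/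
def N (w : V ≃ₗ[ℝ] V) : Set V := {γ ∈ R.pos | -(w γ) ∈ R.pos}

/-- The length of `w`: minimal length of an expression of `w` as a product of
simple reflections. -/
noncomputable def len (w : V ≃ₗ[ℝ] V) : ℕ :=
  sInf {n | ∃ l : List ι, l.length = n ∧
    (l.map fun i => R.reflect (R.sroot i)).prod = w}

/-- The coroot `a∨ = 2a/(a,a)`. -/
@[nolint unusedArguments]
noncomputable def coroot (_R : RSD ι V) (a : V) : V := (2 / ⟪a, a⟫) • a

/-- `ρ`, the half-sum of the positive roots. -/
noncomputable def rho : V :=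
  (2⁻¹ : ℝ) • ∑ a ∈ (R.finite.subset (fun a ha => ha.1 : R.pos ⊆ R.Δ)).toFinset, a

/-- `R.HtIs γ n` : the height of `γ` is `n`. -/
def HtIs (γ : V) (n : ℕ) : Prop :=
  ∃ c : ι → ℕ, γ = ∑ i, (c i : ℝ) • R.sroot i ∧ ∑ i, c i = n

/-- A long root: a root of maximal squared length. -/
def IsLong (γ : V) : Prop := γ ∈ R.Δ ∧ ∀ b ∈ R.Δ, ⟪b, b⟫ ≤ ⟪γ, γ⟫

/-- The highest root. -/
def IsHighest (θ : V) : Prop := θ ∈ R.pos ∧ ∀ γ ∈ R.pos, R.le γ θ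

/-- Simply-laced: all roots have the same length. -/
def SimplyLaced : Prop := ∀ a ∈ R.Δ, ∀ b ∈ R.Δ, ⟪a, a⟫ = ⟪b, b⟫

/-- A minimal inversion complete set. -/
def IsMICS (F : Set (V ≃ₗ[ℝ] V)) : Prop :=
  (∀ w ∈ F, w ∈ R.W) ∧ (⋃ w ∈ F, R.N w) = R.pos ∧
    ∀ F' ⊂ F, (⋃ w ∈ F', R.N w) ≠ R.pos

end RSD

/-!
Write `w = m · σ_i σ_j σ_i · v` as a reduced word and put `δ = v γ`. The middle block is the
reflection in `θ = α_i + α_j`. If `δ` were orthogonal to `α_i`, to `α_j` or to `θ`, the block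
could be shortened (using the braid relation in the second case) without changing `w γ`,
contradicting minimality. Otherwise, since all roots have the same length, the integers
`⟨α_i^∨, δ⟩`, `⟨α_j^∨, δ⟩` and their sum `⟨θ^∨, δ⟩` lie in `{±1, ±2}`, which forces
`δ = ±α_i, ±α_j` or `±θ`. Now `{α_i, α_j, θ}` is the inversion set of `σ_i σ_j σ_i`, and
reducedness of `m · σ_i σ_j σ_i` and of `σ_i σ_j σ_i · v` means that `m` keeps it positive and
`v⁻¹` keeps it positive. If `δ` lies in it then `μ = m σ_i σ_j σ_i δ` is negative; if `-δ`
lies in it then `γ = v⁻¹ δ` is negative.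
-/

lemma abs_real_inner_le_of_inner_self_eq {E : Type*} [NormedAddCommGroup E]
    [InnerProductSpace ℝ E] {x y : E} (h : ⟪y, y⟫ = ⟪x, x⟫) : |⟪x, y⟫| ≤ ⟪x, x⟫ := by
  rw [real_inner_self_eq_norm_sq, real_inner_self_eq_norm_sq] at h
  calc |⟪x, y⟫| ≤ ‖x‖ * ‖y‖ := abs_real_inner_le_norm x y
    _ = ⟪x, x⟫ := by
      rw [(sq_eq_sq₀ (norm_nonneg _) (norm_nonneg _)).mp h, real_inner_self_eq_norm_mul_norm]

lemma eq_of_real_inner_eq_inner_self {E : Type*} [NormedAddCommGroup E]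
    [InnerProductSpace ℝ E] {x y : E} (h : ⟪y, y⟫ = ⟪x, x⟫) (hxy : ⟪x, y⟫ = ⟪x, x⟫) :
    y = x := by
  rw [← sub_eq_zero, ← inner_self_eq_zero (𝕜 := ℝ)]
  simp only [inner_sub_left, inner_sub_right, real_inner_comm x y]
  linarith

namespace RSD

variable {ι V : Type*} [Fintype ι] [NormedAddCommGroup V] [InnerProductSpace ℝ V]
  {R : RSD ι V} {a b x : V}

local notation:max "α" i:max => R.sroot i
local notation:max "σ" i:max => R.reflect (R.sroot i)

lemma inner_self_pos (ha : a ∈ R.Δ) : 0 < ⟪a, a⟫ :=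
  real_inner_self_pos.mpr fun h => R.zero_not_mem (h ▸ ha)

lemma reflect_apply_eq_sub_smul {n : ℝ} (ha : a ∈ R.Δ) (h : 2 * ⟪a, x⟫ = n * ⟪a, a⟫) :
    R.reflect a x = x - n • a := by
  rw [R.reflect_apply a ha, h, mul_div_cancel_right₀ _ (inner_self_pos ha).ne']

lemma reflect_self (ha : a ∈ R.Δ) : R.reflect a a = -a := by
  rw [reflect_apply_eq_sub_smul (n := 2) ha rfl, two_smul, sub_add_cancel_left]

lemma reflect_eq_self_of_inner_eq_zero (ha : a ∈ R.Δ) (h : ⟪a, x⟫ = 0) : R.reflect a x = x := by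
  rw [reflect_apply_eq_sub_smul (n := 0) ha (by simp [h]), zero_smul, sub_zero]

lemma reflect_reflect (ha : a ∈ R.Δ) (x : V) : R.reflect a (R.reflect a x) = x := by
  have hA := (inner_self_pos ha).ne'
  rw [R.reflect_apply a ha, R.reflect_apply a ha, inner_sub_right, real_inner_smul_right]
  match_scalars
  · ring
  · field_simp
    ring

lemma reflect_mul_reflect (ha : a ∈ R.Δ) : R.reflect a * R.reflect a = 1 :=
  LinearEquiv.ext (reflect_reflect ha)

lemma inner_reflect_reflect (ha : a ∈ R.Δ) (x y : V) :
    ⟪R.reflect a x, R.reflect a y⟫ = ⟪x, y⟫ := by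
  have hA := (inner_self_pos ha).ne'
  rw [R.reflect_apply a ha, R.reflect_apply a ha]
  simp only [inner_sub_left, inner_sub_right, real_inner_smul_left, real_inner_smul_right]
  rw [real_inner_comm x a]
  field_simp
  ring

lemma reflect_reflect_sroot (i : ι) (ha : a ∈ R.Δ) :
    R.reflect (σ i a) = σ i * R.reflect a * σ i := by
  have hi := R.sroot_mem i
  ext x
  have hx : ⟪σ i a, x⟫ = ⟪a, σ i x⟫ := by
    conv_lhs => rw [← reflect_reflect hi x]
    exact inner_reflect_reflect hi _ _
  rw [R.reflect_apply _ (R.reflect_root_mem _ hi _ ha), LinearEquiv.mul_apply,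
    LinearEquiv.mul_apply, R.reflect_apply a ha, map_sub, map_smul, reflect_reflect hi, hx,
    inner_reflect_reflect hi]

variable (R) in
def wordProd (l : List ι) : V ≃ₗ[ℝ] V :=
  (l.map fun i => R.reflect (R.sroot i)).prod

@[simp]
lemma wordProd_nil : R.wordProd [] = 1 := rfl

@[simp]
lemma wordProd_cons (i : ι) (l : List ι) : R.wordProd (i :: l) = σ i * R.wordProd l := by
  simp [wordProd]

@[simp]
lemma wordProd_append (l l' : List ι) : R.wordProd (l ++ l') = R.wordProd l * R.wordProd l' := by
  simp [wordProd]

lemma wordProd_reverse (l : List ι) : R.wordProd l.reverse = (R.wordProd l)⁻¹ := by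
  induction l with
  | nil => simp
  | cons i l ih =>
    rw [List.reverse_cons, wordProd_append, ih, wordProd_cons, wordProd_cons, wordProd_nil,
      mul_one, mul_inv_rev, inv_eq_of_mul_eq_one_right (reflect_mul_reflect (R.sroot_mem i))]

@[simp]
lemma wordProd_reverse_apply_wordProd_apply (l : List ι) (x : V) :
    R.wordProd l.reverse (R.wordProd l x) = x := by
  rw [wordProd_reverse, ← LinearEquiv.mul_apply, inv_mul_cancel, LinearEquiv.coe_one, id]

lemma wordProd_mem_W (l : List ι) : R.wordProd l ∈ R.W := by
  induction l with
  | nil => exact one_mem _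
  | cons i l ih => exact mul_mem (Subgroup.subset_closure ⟨i, rfl⟩) ih

lemma wordProd_mem_Δ (l : List ι) (ha : a ∈ R.Δ) : R.wordProd l a ∈ R.Δ := by
  induction l with
  | nil => exact ha
  | cons i l ih => exact R.reflect_root_mem _ (R.sroot_mem i) _ ih

lemma len_wordProd_le (l : List ι) : R.len (R.wordProd l) ≤ l.length :=
  Nat.sInf_le ⟨l, rfl, rfl⟩

variable (R) in
lemma sroot_mem_pos (i : ι) : α i ∈ R.pos := by
  classical
  exact ⟨R.sroot_mem i, Pi.single i 1, by simp [Pi.single_apply]⟩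

lemma neg_notMem_pos (ha : a ∈ R.pos) : -a ∉ R.pos := by
  rintro ⟨-, d, hd⟩
  obtain ⟨haΔ, c, hc⟩ := ha
  have hcd := Fintype.linearIndependent_iffₛ.mp R.sroot_indep (fun k => (c k + d k : ℝ)) 0
    (by simp only [add_smul, Finset.sum_add_distrib, ← hc, ← hd, add_neg_cancel, Pi.zero_apply,
      zero_smul, Finset.sum_const_zero])
  have hc0 : ∀ k, c k = 0 := fun k => by
    have : (c k : ℝ) + d k = 0 := hcd k
    norm_cast at this
    omega
  exact R.zero_not_mem (by simpa [hc, hc0] using haΔ)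

lemma mem_pos_or_neg_mem_pos (ha : a ∈ R.Δ) : a ∈ R.pos ∨ -a ∈ R.pos := by
  rcases R.decomp a ha with ⟨c, hc⟩ | ⟨c, hc⟩
  · exact Or.inl ⟨ha, c, hc⟩
  · exact Or.inr ⟨R.neg_mem a ha, c, by rw [hc, neg_neg]⟩

variable (R) in
lemma sub_sroot_notMem_pos {i j : ι} (hij : i ≠ j) : α j - α i ∉ R.pos := by
  classical
  rintro ⟨-, c, hc⟩
  have hsum : ∑ k, ((c k : ℝ) + (Pi.single i 1 : ι → ℝ) k) • α k
      = ∑ k, (Pi.single j 1 : ι → ℝ) k • α k := by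
    simp only [add_smul, Finset.sum_add_distrib, ← hc, Pi.single_apply, ite_smul, one_smul,
      zero_smul, Finset.sum_ite_eq', Finset.mem_univ, if_true]
    abel
  have h := Fintype.linearIndependent_iffₛ.mp R.sroot_indep _ _ hsum i
  simp only [Pi.single_eq_same, Pi.single_apply, hij, if_false] at h
  linarith [(Nat.cast_nonneg (c i) : (0 : ℝ) ≤ c i)]

variable (R) in
def IsReduced (l : List ι) : Prop :=
  ∀ l' : List ι, R.wordProd l' = R.wordProd l → l.length ≤ l'.length

lemma IsReduced.append_left {l₁ l₂ : List ι} (h : R.IsReduced (l₁ ++ l₂)) : R.IsReduced l₁ :=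
  fun l' hl' => by simpa using h (l' ++ l₂) (by simp [hl'])

lemma IsReduced.append_right {l₁ l₂ : List ι} (h : R.IsReduced (l₁ ++ l₂)) : R.IsReduced l₂ :=
  fun l' hl' => by simpa using h (l₁ ++ l') (by simp [hl'])

lemma IsReduced.reverse {l : List ι} (h : R.IsReduced l) : R.IsReduced l.reverse :=
  fun l' hl' => by
    simpa using h l'.reverse (by rw [wordProd_reverse, hl', wordProd_reverse, inv_inv])

variable (R) in
/-- The inversion set of `σ_i σ_j σ_i` when `i` and `j` are adjacent. -/
def braidInversions (i j : ι) : Set V := {α i, α j, α i + α j}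

namespace SimplyLaced

lemma exists_int_two_inner_eq (hsl : R.SimplyLaced) (ha : a ∈ R.Δ) (hb : b ∈ R.Δ) :
    ∃ n : ℤ, 2 * ⟪a, b⟫ = n * ⟪a, a⟫ ∧ |n| ≤ 2 := by
  obtain ⟨n, hn⟩ := R.crys a ha b hb
  have hA := inner_self_pos ha
  have h2 : 2 * ⟪a, b⟫ = n * ⟪a, a⟫ := by rw [← hn, div_mul_cancel₀ _ hA.ne']
  refine ⟨n, h2, ?_⟩
  have : |(n : ℝ)| * ⟪a, a⟫ ≤ 2 * ⟪a, a⟫ := by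
    rw [← abs_of_pos hA, ← abs_mul, ← h2, abs_mul, abs_two, abs_of_pos hA]
    linarith [abs_real_inner_le_of_inner_self_eq (hsl b hb a ha)]
  exact_mod_cast le_of_mul_le_mul_right this hA

lemma eq_or_neg_eq_of_abs_eq_two (hsl : R.SimplyLaced) (ha : a ∈ R.Δ) (hb : b ∈ R.Δ) {n : ℤ}
    (h : 2 * ⟪a, b⟫ = n * ⟪a, a⟫) (hn : |n| = 2) : b = a ∨ -b = a := by
  have hbb : ⟪b, b⟫ = ⟪a, a⟫ := hsl b hb a ha
  rcases (abs_eq zero_le_two).mp hn with rfl | rfl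
  · exact Or.inl (eq_of_real_inner_eq_inner_self hbb (by push_cast at h; linarith))
  · refine Or.inr (eq_of_real_inner_eq_inner_self (by rwa [inner_neg_neg]) ?_)
    rw [inner_neg_right]
    push_cast at h
    linarith

lemma two_inner_sroot_eq_neg (hsl : R.SimplyLaced) {i j : ι} (hij : i ≠ j)
    (hadj : ⟪α i, α j⟫ ≠ 0) : 2 * ⟪α i, α j⟫ = -⟪α i, α i⟫ := by
  have hi := R.sroot_mem i
  have hj := R.sroot_mem j
  obtain ⟨n, hn, hn2⟩ := hsl.exists_int_two_inner_eq hi hj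
  have h0 : n ≠ 0 := by
    rintro rfl
    exact hadj (by simpa using hn)
  have h2 : |n| ≠ 2 := by
    intro h
    rcases hsl.eq_or_neg_eq_of_abs_eq_two hi hj hn h with h | h
    · exact hij (R.sroot_indep.injective h).symm
    · exact neg_notMem_pos (R.sroot_mem_pos j) (h ▸ R.sroot_mem_pos i)
  have h1 : n ≠ 1 := by
    rintro rfl
    have hmem := R.reflect_root_mem _ hi _ hj
    rw [reflect_apply_eq_sub_smul (n := 1) hi (by exact_mod_cast hn), one_smul] at hmem
    rcases mem_pos_or_neg_mem_pos hmem with h | h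
    · exact R.sub_sroot_notMem_pos hij h
    · exact R.sub_sroot_notMem_pos hij.symm (by rwa [neg_sub] at h)
  obtain rfl : n = -1 := by
    rw [abs_le] at hn2
    rw [Ne, abs_eq zero_le_two] at h2
    omega
  rw [hn]
  push_cast
  ring

lemma reflect_sroot_sroot (hsl : R.SimplyLaced) {i j : ι} (hij : i ≠ j)
    (hadj : ⟪α i, α j⟫ ≠ 0) : σ i (α j) = α i + α j := by
  rw [reflect_apply_eq_sub_smul (n := -1) (R.sroot_mem i)
    (by rw [hsl.two_inner_sroot_eq_neg hij hadj]; ring), neg_one_smul, sub_neg_eq_add, add_comm]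

lemma add_sroot_mem_Δ (hsl : R.SimplyLaced) {i j : ι} (hij : i ≠ j)
    (hadj : ⟪α i, α j⟫ ≠ 0) : α i + α j ∈ R.Δ :=
  hsl.reflect_sroot_sroot hij hadj ▸ R.reflect_root_mem _ (R.sroot_mem i) _ (R.sroot_mem j)

lemma reflect_sroot_add_sroot (hsl : R.SimplyLaced) {i j : ι} (hij : i ≠ j)
    (hadj : ⟪α i, α j⟫ ≠ 0) : σ i (α i + α j) = α j := by
  rw [map_add, reflect_self (R.sroot_mem i), hsl.reflect_sroot_sroot hij hadj, neg_add_cancel_left]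

lemma wordProd_braid (hsl : R.SimplyLaced) {i j : ι} (hij : i ≠ j) (hadj : ⟪α i, α j⟫ ≠ 0) :
    R.wordProd [i, j, i] = R.reflect (α i + α j) := by
  rw [← hsl.reflect_sroot_sroot hij hadj, reflect_reflect_sroot i (R.sroot_mem j)]
  simp [mul_assoc]

lemma neg_wordProd_braid_mem (hsl : R.SimplyLaced) {i j : ι} (hij : i ≠ j)
    (hadj : ⟪α i, α j⟫ ≠ 0) (hb : b ∈ R.braidInversions i j) :
    -(R.wordProd [i, j, i] b) ∈ R.braidInversions i j := by
  have hadj' : ⟪α j, α i⟫ ≠ 0 := by rwa [real_inner_comm]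
  have hji := hsl.reflect_sroot_sroot hij.symm hadj'
  have hji' := hsl.reflect_sroot_add_sroot hij.symm hadj'
  rw [add_comm] at hji hji'
  rcases hb with rfl | rfl | rfl <;>
    simp [braidInversions, reflect_self (R.sroot_mem i), reflect_self (R.sroot_mem j),
      hsl.reflect_sroot_sroot hij hadj, hsl.reflect_sroot_add_sroot hij hadj, hji, hji']

lemma reflect_sroot_mem_pos (hsl : R.SimplyLaced) (i : ι) (hb : b ∈ R.pos) (hne : b ≠ α i) :
    σ i b ∈ R.pos := by
  classical
  obtain ⟨hbΔ, c, hc⟩ := hb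
  have hi := R.sroot_mem i
  -- simply-lacedness rules out `b = 2 α_i`, so `b` has a nonzero coefficient off `α_i`
  obtain ⟨k, hki, hck⟩ : ∃ k ≠ i, c k ≠ 0 := by
    by_contra! h
    have hbi : b = (c i : ℝ) • α i := by
      rw [hc, Finset.sum_eq_single i (fun k _ hk => by simp [h k hk]) (by simp)]
    have hbb := hsl b hbΔ _ hi
    rw [hbi, real_inner_smul_left, real_inner_smul_right] at hbb
    have hsq : (c i : ℝ) * c i = 1 :=
      mul_right_cancel₀ (inner_self_pos hi).ne' (by rw [mul_assoc, hbb, one_mul])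
    norm_cast at hsq
    exact hne (by rw [hbi, Nat.eq_one_of_mul_eq_one_right hsq, Nat.cast_one, one_smul])
  refine (mem_pos_or_neg_mem_pos (R.reflect_root_mem _ hi _ hbΔ)).resolve_right ?_
  rintro ⟨-, d, hd⟩
  set n := 2 * ⟪α i, b⟫ / ⟪α i, α i⟫
  have hsum : ∑ k, ((c k : ℝ) + d k) • α k = ∑ k, (Pi.single i n : ι → ℝ) k • α k := by
    simp only [add_smul, Finset.sum_add_distrib, ← hc, ← hd, R.reflect_apply _ hi b,
      Pi.single_apply, ite_smul, zero_smul, Finset.sum_ite_eq', Finset.mem_univ, if_true]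
    abel
  have h := Fintype.linearIndependent_iffₛ.mp R.sroot_indep _ _ hsum k
  simp only [Pi.single_apply, hki, if_false] at h
  norm_cast at h
  omega

/-- The strong exchange condition. -/
lemma exists_wordProd_mul_reflect_eq (hsl : R.SimplyLaced) (A : List ι) (hb : b ∈ R.pos)
    (hAb : -(R.wordProd A b) ∈ R.pos) :
    ∃ A₁ k A₂, A = A₁ ++ [k] ++ A₂ ∧ R.wordProd A * R.reflect b = R.wordProd (A₁ ++ A₂) := by
  induction A using List.reverseRecOn generalizing b with
  | nil => exact absurd hAb (neg_notMem_pos hb)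
  | append_singleton A a ih =>
    by_cases hba : b = α a
    · subst hba
      exact ⟨A, a, [], by simp, by simp [mul_assoc, reflect_mul_reflect (R.sroot_mem a)]⟩
    obtain ⟨A₁, k, A₂, rfl, hA⟩ :=
      ih (hsl.reflect_sroot_mem_pos a hb hba) (by simpa using hAb)
    refine ⟨A₁, k, A₂ ++ [a], by simp, ?_⟩
    calc R.wordProd (A₁ ++ [k] ++ A₂ ++ [a]) * R.reflect b
        = R.wordProd (A₁ ++ [k] ++ A₂) * R.reflect (σ a b) * σ a := by
          rw [reflect_reflect_sroot a hb.1]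
          simp [mul_assoc, reflect_mul_reflect (R.sroot_mem a)]
      _ = R.wordProd (A₁ ++ (A₂ ++ [a])) := by rw [hA]; simp [mul_assoc]

lemma mem_braidInversions_or_neg_mem (hsl : R.SimplyLaced) {i j : ι} (hij : i ≠ j)
    (hadj : ⟪α i, α j⟫ ≠ 0) {δ : V} (hδ : δ ∈ R.Δ) (hi : ⟪α i, δ⟫ ≠ 0) (hj : ⟪α j, δ⟫ ≠ 0)
    (hθ : ⟪α i + α j, δ⟫ ≠ 0) :
    δ ∈ R.braidInversions i j ∨ -δ ∈ R.braidInversions i j := by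
  have hθΔ := hsl.add_sroot_mem_Δ hij hadj
  obtain ⟨p, hp, hp2⟩ := hsl.exists_int_two_inner_eq (R.sroot_mem i) hδ
  obtain ⟨q, hq, hq2⟩ := hsl.exists_int_two_inner_eq (R.sroot_mem j) hδ
  obtain ⟨r, hr, hr2⟩ := hsl.exists_int_two_inner_eq hθΔ hδ
  have hpqr : r = p + q := by
    have hL := inner_self_pos (R.sroot_mem i)
    rw [hsl _ (R.sroot_mem j) _ (R.sroot_mem i)] at hq
    rw [hsl _ hθΔ _ (R.sroot_mem i)] at hr
    have h : (r : ℝ) * ⟪α i, α i⟫ = ((p + q : ℤ) : ℝ) * ⟪α i, α i⟫ := by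
      rw [← hr, inner_add_left, mul_add, hp, hq]
      push_cast
      ring
    exact_mod_cast mul_right_cancel₀ hL.ne' h
  have hp0 : p ≠ 0 := by rintro rfl; exact hi (by simpa using hp)
  have hq0 : q ≠ 0 := by rintro rfl; exact hj (by simpa using hq)
  have hr0 : r ≠ 0 := by rintro rfl; exact hθ (by simpa using hr)
  have htwo : |p| = 2 ∨ |q| = 2 ∨ |r| = 2 := by
    rw [abs_le] at hp2 hq2 hr2
    simp only [abs_eq (zero_le_two : (0 : ℤ) ≤ 2)]
    omega
  rcases htwo with h | h | h
  · rcases hsl.eq_or_neg_eq_of_abs_eq_two (R.sroot_mem i) hδ hp h with h | h <;>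
      simp [braidInversions, h]
  · rcases hsl.eq_or_neg_eq_of_abs_eq_two (R.sroot_mem j) hδ hq h with h | h <;>
      simp [braidInversions, h]
  · rcases hsl.eq_or_neg_eq_of_abs_eq_two hθΔ hδ hr h with h | h <;>
      simp [braidInversions, h]

lemma mem_braidInversions_or_neg_mem_of_forall_ne (hsl : R.SimplyLaced) {i j : ι} (hij : i ≠ j)
    (hadj : ⟪α i, α j⟫ ≠ 0) {δ : V} (hδ : δ ∈ R.Δ)
    (hshort : ∀ c : List ι, c.length < 3 → R.wordProd c δ ≠ R.wordProd [i, j, i] δ) :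
    δ ∈ R.braidInversions i j ∨ -δ ∈ R.braidInversions i j := by
  have hadj' : ⟪α j, α i⟫ ≠ 0 := by rwa [real_inner_comm]
  refine hsl.mem_braidInversions_or_neg_mem hij hadj hδ (fun h => hshort [i, j] (by simp) ?_)
    (fun h => hshort [j, i] (by simp) ?_) (fun h => hshort [] (by simp) ?_)
  · simp [reflect_eq_self_of_inner_eq_zero (R.sroot_mem i) h]
  · rw [hsl.wordProd_braid hij hadj, add_comm, ← hsl.wordProd_braid hij.symm hadj']
    simp [reflect_eq_self_of_inner_eq_zero (R.sroot_mem j) h]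
  · rw [hsl.wordProd_braid hij hadj,
      reflect_eq_self_of_inner_eq_zero (hsl.add_sroot_mem_Δ hij hadj) h]
    rfl

end SimplyLaced

lemma IsReduced.wordProd_sroot_mem_pos (hsl : R.SimplyLaced) {A : List ι} {k : ι}
    (h : R.IsReduced (A ++ [k])) : R.wordProd A (α k) ∈ R.pos := by
  by_contra hA
  have hneg := (mem_pos_or_neg_mem_pos (R.wordProd_mem_Δ A (R.sroot_mem k))).resolve_left hA
  obtain ⟨A₁, j, A₂, rfl, hP⟩ := hsl.exists_wordProd_mul_reflect_eq _ (R.sroot_mem_pos k) hneg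
  have := h (A₁ ++ A₂) (by rw [← hP]; simp [mul_assoc])
  simp at this

lemma IsReduced.wordProd_mem_pos_of_mem_braidInversions (hsl : R.SimplyLaced)
    {A : List ι} {i j : ι} (hij : i ≠ j) (hadj : ⟪α i, α j⟫ ≠ 0)
    (h : R.IsReduced (A ++ [i, j, i])) (hb : b ∈ R.braidInversions i j) :
    R.wordProd A b ∈ R.pos := by
  have key : ∀ c k d, c ++ k :: d = [i, j, i] → R.wordProd (A ++ c) (α k) ∈ R.pos := by
    intro c k d hcd
    refine IsReduced.wordProd_sroot_mem_pos hsl (IsReduced.append_left (l₂ := d) ?_)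
    rwa [List.append_assoc, List.append_assoc, List.singleton_append, hcd]
  have hadj' : ⟪α j, α i⟫ ≠ 0 := by rwa [real_inner_comm]
  have hji := hsl.reflect_sroot_sroot hij.symm hadj'
  rw [add_comm] at hji
  rcases hb with rfl | rfl | rfl
  · simpa using key [] i [j, i] rfl
  · simpa [hji, hsl.reflect_sroot_add_sroot hij hadj] using key [i, j] i [] rfl
  · simpa [hsl.reflect_sroot_sroot hij hadj] using key [i] j [i] rfl

end RSD

theorem minimal_length_element_commutative_general
    {ι V : Type*} [Fintype ι] [NormedAddCommGroup V] [InnerProductSpace ℝ V]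
    (R : RSD ι V) (hsl : R.SimplyLaced) (γ μ : V) (hγ : γ ∈ R.pos) (hμ : μ ∈ R.pos)
    (w : V ≃ₗ[ℝ] V) (hwγ : w γ = μ)
    (hmin : ∀ w' ∈ R.W, w' γ = μ → R.len w ≤ R.len w') :
    ∀ l : List ι, (l.map fun i => R.reflect (R.sroot i)).prod = w → l.length = R.len w →
      ¬ ∃ (l₁ l₂ : List ι) (i j : ι), l = l₁ ++ [i, j, i] ++ l₂ ∧ i ≠ j ∧
          ⟪R.sroot i, R.sroot j⟫ ≠ 0 := by
  rintro _ hl hlen ⟨l₁, l₂, i, j, rfl, hij, hadj⟩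
  have hlγ : R.wordProd (l₁ ++ [i, j, i] ++ l₂) γ = μ := by rw [← hwγ, ← hl]; rfl
  have hshortest : ∀ l', R.wordProd l' γ = μ → (l₁ ++ [i, j, i] ++ l₂).length ≤ l'.length :=
    fun l' hl' => hlen ▸ (hmin _ (R.wordProd_mem_W l') hl').trans (R.len_wordProd_le l')
  have hred : R.IsReduced (l₁ ++ [i, j, i] ++ l₂) := fun l' hl' => hshortest l' (hl' ▸ hlγ)
  obtain ⟨δ, hγδ⟩ : ∃ δ, R.wordProd l₂ γ = δ := ⟨_, rfl⟩
  have hδμ : R.wordProd l₁ (R.wordProd [i, j, i] δ) = μ := by simpa [← hγδ, mul_assoc] using hlγ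
  have hδ := hsl.mem_braidInversions_or_neg_mem_of_forall_ne hij hadj
    (hγδ ▸ R.wordProd_mem_Δ l₂ hγ.1) fun c hc hcδ => by
      have := hshortest (l₁ ++ c ++ l₂) (by simpa [hγδ, hcδ] using hδμ)
      simp only [List.length_append, List.length_cons, List.length_nil] at this
      omega
  rcases hδ with hδ | hδ
  · have hpos := hred.append_left.wordProd_mem_pos_of_mem_braidInversions hsl hij hadj
      (hsl.neg_wordProd_braid_mem hij hadj hδ)
    exact RSD.neg_notMem_pos hpos (by rwa [map_neg, neg_neg, hδμ])
  · have hred₂ : R.IsReduced (l₂.reverse ++ [i, j, i]) := by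
      rw [List.append_assoc] at hred
      simpa using hred.append_right.reverse
    have hpos := hred₂.wordProd_mem_pos_of_mem_braidInversions hsl hij hadj hδ
    exact RSD.neg_notMem_pos hpos (by rwa [map_neg, neg_neg, ← hγδ,
      RSD.wordProd_reverse_apply_wordProd_apply])

/-- In the simply-laced case the minimal-length element taking `γ` to
`μ` (for `γ ≽ μ`) is commutative: no reduced expression contains `σ_i σ_j σ_i` with
`i`, `j` adjacent. -/
theorem minimal_length_element_commutative
    {ι V : Type*} [Fintype ι] [NormedAddCommGroup V] [InnerProductSpace ℝ V]
    (R : RSD ι V) (hsl : R.SimplyLaced) (γ μ : V) (hγ : γ ∈ R.pos) (hμ : μ ∈ R.pos)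
    (hle : R.le μ γ) (w : V ≃ₗ[ℝ] V) (hw : w ∈ R.W) (hwγ : w γ = μ)
    (hmin : ∀ w' ∈ R.W, w' γ = μ → R.len w ≤ R.len w') :
    ∀ l : List ι, (l.map fun i => R.reflect (R.sroot i)).prod = w → l.length = R.len w →
      ¬ ∃ (l₁ l₂ : List ι) (i j : ι), l = l₁ ++ [i, j, i] ++ l₂ ∧ i ≠ j ∧
          ⟪R.sroot i, R.sroot j⟫ ≠ 0 :=
  minimal_length_element_commutative_general R hsl γ μ hγ hμ w hwγ hmin
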